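/- arXiv:1410.3331 — 2 statements merged into one kernel-verified Lean document; each statement's English description precedes it below -/
import Mathlib

section
/- Let a be a continuous accretive form and j ∈ L(V,H) with dense range. If j(D_j(a)) is dense in H, then D_j(a) ∩ ker j ⊆ ker T₀; in particular (a,j) is associated with an accretive operator. -/
/-!
Since `a u v = ⟪v, T₀ u⟫`, the identity `a u · = ⟪j ·, f⟫` says exactly `j† f = T₀ u`. Hence
`D_j(a) = T₀⁻¹(range j†)`, and the associated operator, if any, has graph
`{(j u, f) | j† f = T₀ u}`. This linear relation is a graph as soon as `j u = 0`, `j† f = T₀ u`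
force `f = 0`. For such `u`, accretivity of `a` along `w + c u` forces
`⟪j w, f⟫ = a u w = 0` for all `w ∈ D_j(a)`, so `f` is orthogonal to the dense set `j(D_j(a))`.
Then `T₀ u = j† f = 0` as well, and the operator inherits accretivity from `a`.
-/

open scoped InnerProductSpace

variable {V H : Type*} [NormedAddCommGroup V] [InnerProductSpace ℂ V] [CompleteSpace V]
  [NormedAddCommGroup H] [InnerProductSpace ℂ H] [CompleteSpace H]

/-- The space `D_j(a)` of a form `a : V × V → ℂ` with respect to `j`. -/
def Dj (a : V → V → ℂ) (j : V →L[ℂ] H) : Set V :=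
  {u : V | ∃ f : H, ∀ v : V, a u v = ⟪j v, f⟫_ℂ}

/-- `A` is the operator associated with `(a, j)`. -/
def IsAssociatedOperator (a : V → V → ℂ) (j : V →L[ℂ] H) (A : H →ₗ.[ℂ] H) : Prop :=
  (A.domain : Set H) = j '' Dj a j ∧
    ∀ u ∈ Dj a j, ∀ hju : j u ∈ A.domain, ∀ v : V,
      a u v = ⟪j v, A ⟨j u, hju⟩⟫_ℂ

open scoped InnerProduct

theorem Complex.eq_zero_of_forall_re_add_re_mul_nonneg {r : ℝ} {z : ℂ}
    (h : ∀ c : ℂ, 0 ≤ r + (c * z).re) : z = 0 := by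
  by_contra hz
  have := h (-(|r| + 1 : ℝ) / z)
  rw [div_mul_cancel₀ _ hz, ← Complex.ofReal_neg, Complex.ofReal_re] at this
  linarith [le_abs_self r]

section Accretive

variable {E : Type*} [SeminormedAddCommGroup E] [InnerProductSpace ℂ E]

/-- Under the hypotheses, `⟪w + c • u, T (w + c • u)⟫ = ⟪w, T w⟫ + c * ⟪w, T u⟫`, whose real part
cannot stay nonnegative for all `c` unless `⟪w, T u⟫ = 0`. -/
theorem inner_apply_eq_zero_of_accretive {T : E →ₗ[ℂ] E} (hT : ∀ x, 0 ≤ (⟪x, T x⟫_ℂ).re)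
    {u w : E} (hu : ⟪u, T u⟫_ℂ = 0) (hwu : ⟪u, T w⟫_ℂ = 0) : ⟪w, T u⟫_ℂ = 0 := by
  refine Complex.eq_zero_of_forall_re_add_re_mul_nonneg (r := (⟪w, T w⟫_ℂ).re) fun c => ?_
  have hexpand : ⟪w + c • u, T (w + c • u)⟫_ℂ = ⟪w, T w⟫_ℂ + c * ⟪w, T u⟫_ℂ := by
    simp only [map_add, map_smul, inner_add_left, inner_add_right, inner_smul_left,
      inner_smul_right, hu, hwu, mul_zero, add_zero]
  simpa only [hexpand, Complex.add_re] using hT (w + c • u)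

end Accretive

section AssociatedOperator

variable {a : V → V → ℂ} {T₀ : V →L[ℂ] V} {j : V →L[ℂ] H}

theorem forall_eq_inner_iff_adjoint_apply_eq (hT₀ : ∀ u v : V, a u v = ⟪v, T₀ u⟫_ℂ) {u : V}
    {f : H} : (∀ v, a u v = ⟪j v, f⟫_ℂ) ↔ (j†) f = T₀ u := by
  simp only [hT₀, ← ContinuousLinearMap.adjoint_inner_right, eq_comm (a := ⟪_, T₀ u⟫_ℂ)]
  exact (ext_iff_inner_left ℂ).symm

theorem Dj_eq_preimage_range_adjoint (hT₀ : ∀ u v : V, a u v = ⟪v, T₀ u⟫_ℂ) :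
    Dj a j = T₀ ⁻¹' Set.range (j†) := by
  ext u
  exact exists_congr fun _ => forall_eq_inner_iff_adjoint_apply_eq hT₀

variable (T₀ j) in
def associatedGraph : Submodule ℂ (H × H) where
  carrier := {p | ∃ u, j u = p.1 ∧ (j†) p.2 = T₀ u}
  add_mem' := by
    rintro p q ⟨u, hu₁, hu₂⟩ ⟨w, hw₁, hw₂⟩
    exact ⟨u + w, by simp [hu₁, hw₁], by simp [hu₂, hw₂]⟩
  zero_mem' := ⟨0, by simp⟩
  smul_mem' := by
    rintro c p ⟨u, hu₁, hu₂⟩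
    exact ⟨c • u, by simp [hu₁], by simp [hu₂]⟩

theorem coe_map_fst_associatedGraph :
    ((associatedGraph T₀ j).map (LinearMap.fst ℂ H H) : Set H) =
      j '' (T₀ ⁻¹' Set.range (j†)) := by
  ext x
  constructor
  · rintro ⟨⟨_, f⟩, ⟨u, rfl, hf⟩, rfl⟩
    exact ⟨u, ⟨f, hf⟩, rfl⟩
  · rintro ⟨u, ⟨f, hf⟩, rfl⟩
    exact ⟨(j u, f), ⟨u, rfl, hf⟩, rfl⟩

theorem snd_eq_zero_of_mem_associatedGraph (hacc : ∀ u, 0 ≤ (⟪u, T₀ u⟫_ℂ).re)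
    (hdense : Dense (j '' (T₀ ⁻¹' Set.range (j†)))) {p : H × H}
    (hp : p ∈ associatedGraph T₀ j) (hp₁ : p.1 = 0) : p.2 = 0 := by
  obtain ⟨u, hju, hu⟩ := hp
  rw [hp₁] at hju
  have hinner_u : ∀ g : H, ⟪u, (j†) g⟫_ℂ = 0 := fun g => by
    rw [ContinuousLinearMap.adjoint_inner_right, hju, inner_zero_left]
  refine hdense.eq_zero_of_inner_right (𝕜 := ℂ) ?_
  rintro _ ⟨w, ⟨g, hg⟩, rfl⟩
  rw [← ContinuousLinearMap.adjoint_inner_right, hu]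
  refine inner_apply_eq_zero_of_accretive (T := (T₀ : V →ₗ[ℂ] V)) hacc ?_ ?_
  · simpa [hu] using hinner_u p.2
  · simpa [hg] using hinner_u g

theorem isAssociatedOperator_toLinearPMap (hT₀ : ∀ u v : V, a u v = ⟪v, T₀ u⟫_ℂ)
    (hsingle : ∀ p ∈ associatedGraph T₀ j, p.1 = 0 → p.2 = 0) :
    IsAssociatedOperator a j (associatedGraph T₀ j).toLinearPMap := by
  refine ⟨by rw [Dj_eq_preimage_range_adjoint hT₀]; exact coe_map_fst_associatedGraph, ?_⟩
  rintro u ⟨f, hf⟩ hju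
  have hmem : (j u, f) ∈ (associatedGraph T₀ j).toLinearPMap.graph := by
    rw [Submodule.toLinearPMap_graph_eq _ hsingle]
    exact ⟨u, rfl, (forall_eq_inner_iff_adjoint_apply_eq hT₀).1 hf⟩
  have hAf : (associatedGraph T₀ j).toLinearPMap ⟨j u, hju⟩ = f :=
    LinearPMap.mem_graph_snd_inj _ (LinearPMap.mem_graph _ ⟨j u, hju⟩) hmem rfl
  rwa [hAf]

theorem re_inner_toLinearPMap_nonneg (hacc : ∀ u, 0 ≤ (⟪u, T₀ u⟫_ℂ).re)
    (hsingle : ∀ p ∈ associatedGraph T₀ j, p.1 = 0 → p.2 = 0)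
    (x : (associatedGraph T₀ j).toLinearPMap.domain) :
    0 ≤ (⟪(associatedGraph T₀ j).toLinearPMap x, (x : H)⟫_ℂ).re := by
  obtain ⟨u, hu, hA⟩ : ∃ u, j u = x ∧ (j†) ((associatedGraph T₀ j).toLinearPMap x) = T₀ u :=
    (associatedGraph T₀ j).mem_graph_toLinearPMap hsingle x
  rw [← hu, ← ContinuousLinearMap.adjoint_inner_left, hA, ← inner_conj_symm, Complex.conj_re]
  exact hacc u

end AssociatedOperator

theorem associated_of_dense_image_general
    (j : V →L[ℂ] H)
    (a : V → V → ℂ)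
    (hacc : ∀ u : V, 0 ≤ (a u u).re)
    (T₀ : V →L[ℂ] V) (hT₀ : ∀ u v : V, a u v = ⟪v, T₀ u⟫_ℂ)
    (hdense : Dense (j '' Dj a j)) :
    Dj a j ∩ {u : V | j u = 0} ⊆ {u : V | T₀ u = 0} ∧
      ∃ A : H →ₗ.[ℂ] H, (∀ x : A.domain, 0 ≤ (⟪A x, (x : H)⟫_ℂ).re) ∧
        IsAssociatedOperator a j A := by
  have hacc₀ : ∀ u, 0 ≤ (⟪u, T₀ u⟫_ℂ).re := fun u => hT₀ u u ▸ hacc u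
  rw [Dj_eq_preimage_range_adjoint hT₀] at hdense
  have hsingle : ∀ p ∈ associatedGraph T₀ j, p.1 = 0 → p.2 = 0 :=
    fun _ => snd_eq_zero_of_mem_associatedGraph hacc₀ hdense
  refine ⟨?_, _, re_inner_toLinearPMap_nonneg hacc₀ hsingle,
    isAssociatedOperator_toLinearPMap hT₀ hsingle⟩
  rintro u ⟨⟨f, hf⟩, hju⟩
  have hTu := (forall_eq_inner_iff_adjoint_apply_eq hT₀).1 hf
  have hf₀ : f = 0 := hsingle (j u, f) ⟨u, rfl, hTu⟩ hju
  rw [Set.mem_ofPred_eq, ← hTu, hf₀, map_zero]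

/-- If `j(D_j(a))` is dense in `H`, then
`D_j(a) ∩ ker j ⊆ ker T₀`; in particular `(a,j)` is associated with an accretive
operator. -/
theorem associated_of_dense_image
    (j : V →L[ℂ] H) (hj : DenseRange j)
    (a : V → V → ℂ)
    (hcont : ∃ M : ℝ, ∀ u v : V, ‖a u v‖ ≤ M * ‖u‖ * ‖v‖)
    (hacc : ∀ u : V, 0 ≤ (a u u).re)
    (T₀ : V →L[ℂ] V) (hT₀ : ∀ u v : V, a u v = ⟪v, T₀ u⟫_ℂ)
    (hdense : Dense (j '' Dj a j)) :
    Dj a j ∩ {u : V | j u = 0} ⊆ {u : V | T₀ u = 0} ∧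
      ∃ A : H →ₗ.[ℂ] H, (∀ x : A.domain, 0 ≤ (⟪A x, (x : H)⟫_ℂ).re) ∧
        IsAssociatedOperator a j A :=
  associated_of_dense_image_general j a hacc T₀ hT₀ hdense
end

section
/- Let H be a complex Hilbert space and A an accretive operator in H that is maximal accretive and can be generated by an accretive form (equivalently, rg(I+A) is an operator range in H). Then A is m-accretive. More precisely: if A is maximal accretive and rg(I+A) is an operator range in H (i.e., the range of some bounded operator on H), then rg(I+A) = H. -/
/-!
Write `R = rg(I + A)`. Accretivity gives `‖x‖ ≤ ‖x + A x‖`, so `(I + A)⁻¹` is a contraction on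
`R`. Maximality makes `R` dense: a vector `y ⊥ R` can be adjoined to the domain with `A y = y`
without losing accretivity, and then `Re ⟪A y, y⟫ = -‖y‖²` forces `y = 0`. Hence `(I + A)⁻¹`
extends to a contraction `T` on `H` with `‖T w‖² ≤ Re ⟪w, T w⟫`, and maximality again shows that
`T` maps into `dom A`. Therefore `y = (I + A) T y + (y - (I + A) T y)` splits `H` as `R ⊕ ker T`.
An operator range with a closed complement is closed, and being dense, `R = H`.
-/

open scoped InnerProductSpace

theorem ContinuousLinearMap.isClosed_range_of_isCompl {𝕜 E F : Type*} [NontriviallyNormedField 𝕜]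
    [NormedAddCommGroup E] [NormedSpace 𝕜 E] [CompleteSpace E]
    [NormedAddCommGroup F] [NormedSpace 𝕜 F] [CompleteSpace F]
    (f : E →L[𝕜] F) (G : Submodule 𝕜 F) (h : IsCompl f.range G) (hG : IsClosed (G : Set F)) :
    IsClosed (f.range : Set F) := by
  have : IsClosed (f.ker : Set E) := f.isClosed_ker
  have hrange : (f.ker.liftQL f le_rfl).range = f.range := Submodule.range_liftQ _ _ _
  rw [← hrange] at h ⊢
  exact closed_complemented_range_of_isCompl_of_ker_eq_bot _ G h hG
    (Submodule.ker_liftQ_eq_bot _ _ _ le_rfl)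

namespace LinearPMap

variable {𝕜 H : Type*} [RCLike 𝕜] [NormedAddCommGroup H] [InnerProductSpace 𝕜 H]

def IsAccretive (A : H →ₗ.[𝕜] H) : Prop :=
  ∀ x : A.domain, 0 ≤ RCLike.re ⟪A x, (x : H)⟫_𝕜

def IsMaximalAccretive (A : H →ₗ.[𝕜] H) : Prop :=
  A.IsAccretive ∧ ∀ B : H →ₗ.[𝕜] H, B.IsAccretive → A ≤ B → A = B

def oneAdd (A : H →ₗ.[𝕜] H) : A.domain →ₗ[𝕜] H :=
  A.domain.subtype + A.toFun

variable {A : H →ₗ.[𝕜] H}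

@[simp]
theorem oneAdd_apply (x : A.domain) : A.oneAdd x = x + A x := rfl

theorem coe_range_oneAdd :
    (LinearMap.range A.oneAdd : Set H) = Set.range fun x : A.domain => (x : H) + A x := rfl

theorem IsAccretive.norm_sq_le_re_inner (hA : A.IsAccretive) (x : A.domain) :
    ‖(x : H)‖ ^ 2 ≤ RCLike.re ⟪A.oneAdd x, (x : H)⟫_𝕜 := by
  rw [oneAdd_apply, inner_add_left, _root_.map_add, inner_self_eq_norm_sq]
  linarith [hA x]

theorem IsAccretive.norm_le_norm_oneAdd (hA : A.IsAccretive) (x : A.domain) :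
    ‖(x : H)‖ ≤ ‖A.oneAdd x‖ := by
  have h := (hA.norm_sq_le_re_inner x).trans (re_inner_le_norm _ _)
  rcases (norm_nonneg (x : H)).eq_or_lt with h0 | h0
  · rw [← h0]; exact norm_nonneg _
  · nlinarith

theorem isAccretive_supSpanSingleton {x₀ y₀ : H} (hx₀ : x₀ ∉ A.domain)
    (h : ∀ (x : A.domain) (c : 𝕜), 0 ≤ RCLike.re ⟪A x + c • y₀, (x : H) + c • x₀⟫_𝕜) :
    (A.supSpanSingleton x₀ y₀ hx₀).IsAccretive := by
  rintro ⟨z, hz⟩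
  obtain ⟨x, hx, _, hc, rfl⟩ := Submodule.mem_sup.1 hz
  obtain ⟨c, rfl⟩ := Submodule.mem_span_singleton.1 hc
  rw [supSpanSingleton_apply_mk _ _ _ hx₀ x hx c]
  exact h ⟨x, hx⟩ c

theorem IsMaximalAccretive.mem_domain_of_re_inner_nonneg (hA : A.IsMaximalAccretive) {x₀ y₀ : H}
    (h : ∀ (x : A.domain) (c : 𝕜), 0 ≤ RCLike.re ⟪A x + c • y₀, (x : H) + c • x₀⟫_𝕜) :
    x₀ ∈ A.domain := by
  by_contra hx₀
  have hAB := hA.2 _ (isAccretive_supSpanSingleton hx₀ h) (A.left_le_sup _ _)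
  exact hx₀ (hAB ▸ Submodule.mem_sup_right (Submodule.mem_span_singleton_self x₀))

theorem re_inner_apply_add_smul_eq {y : H} (hy : ∀ x : A.domain, ⟪A x, y⟫_𝕜 = -⟪(x : H), y⟫_𝕜)
    (x : A.domain) (c : 𝕜) :
    RCLike.re ⟪A x + c • y, (x : H) + c • y⟫_𝕜 =
      RCLike.re ⟪A x, (x : H)⟫_𝕜 + ‖c‖ ^ 2 * ‖y‖ ^ 2 := by
  simp only [inner_add_right, inner_add_left, inner_smul_left, inner_smul_right, hy,
    inner_self_eq_norm_sq_to_K, _root_.map_add, _root_.map_neg, RCLike.mul_re, RCLike.mul_im,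
    RCLike.conj_re, RCLike.conj_im, RCLike.re_ofReal_pow, RCLike.im_ofReal_pow]
  rw [inner_re_symm y, inner_im_symm y, RCLike.norm_sq_eq_def]
  ring

variable [CompleteSpace H]

theorem IsMaximalAccretive.denseRange_oneAdd (hA : A.IsMaximalAccretive) : DenseRange A.oneAdd := by
  suffices (LinearMap.range A.oneAdd)ᗮ = ⊥ by
    rw [DenseRange, ← LinearMap.coe_range, Submodule.dense_iff_topologicalClosure_eq_top,
      Submodule.topologicalClosure_eq_top_iff, this]
  refine (Submodule.eq_bot_iff _).2 fun y hy => ?_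
  have hAy : ∀ x : A.domain, ⟪A x, y⟫_𝕜 = -⟪(x : H), y⟫_𝕜 := fun x =>
    eq_neg_of_add_eq_zero_right (by
      simpa [inner_add_left] using
        (Submodule.mem_orthogonal _ _).1 hy _ (LinearMap.mem_range_self _ x))
  -- adjoining `y ↦ y` to `A` keeps it accretive
  have hyA : y ∈ A.domain := hA.mem_domain_of_re_inner_nonneg fun x c => by
    rw [re_inner_apply_add_smul_eq hAy]
    exact add_nonneg (hA.1 x) (by positivity)
  have : 0 ≤ -‖y‖ ^ 2 := by simpa [hAy, inner_self_eq_norm_sq] using hA.1 ⟨y, hyA⟩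
  exact norm_eq_zero.1 (by nlinarith [norm_nonneg y])

/-- The continuous extension of `(I + A)⁻¹` from `rg(I + A)` to `H`; meaningful only when `A` is
accretive and `I + A` has dense range. -/
noncomputable def oneAddInv (A : H →ₗ.[𝕜] H) : H →L[𝕜] H :=
  A.domain.subtype.extendOfNorm A.oneAdd

theorem IsAccretive.oneAddInv_oneAdd (hA : A.IsAccretive) (hd : DenseRange A.oneAdd)
    (x : A.domain) : A.oneAddInv (A.oneAdd x) = x :=
  LinearMap.extendOfNorm_eq hd ⟨1, fun x => by simpa using hA.norm_le_norm_oneAdd x⟩ x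

theorem IsAccretive.norm_sq_oneAddInv_le (hA : A.IsAccretive) (hd : DenseRange A.oneAdd) (w : H) :
    ‖A.oneAddInv w‖ ^ 2 ≤ RCLike.re ⟪w, A.oneAddInv w⟫_𝕜 := by
  refine hd.induction_on w (isClosed_le (by fun_prop) (by fun_prop)) fun x => ?_
  rw [hA.oneAddInv_oneAdd hd]
  exact hA.norm_sq_le_re_inner x

theorem IsMaximalAccretive.oneAddInv_mem_domain (hA : A.IsMaximalAccretive) (y : H) :
    A.oneAddInv y ∈ A.domain := by
  have hd := hA.denseRange_oneAdd
  -- adjoining `T y ↦ y - T y` keeps `A` accretive, where `T = (I + A)⁻¹`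
  refine hA.mem_domain_of_re_inner_nonneg (y₀ := y - A.oneAddInv y) fun x c => ?_
  set w := A.oneAdd x + c • y
  have hTw : A.oneAddInv w = x + c • A.oneAddInv y := by
    simp only [w, _root_.map_add, _root_.map_smul, hA.1.oneAddInv_oneAdd hd]
  have hAx : A x + c • (y - A.oneAddInv y) = w - A.oneAddInv w := by
    rw [hTw]
    simp only [w, oneAdd_apply]
    module
  rw [← hTw, hAx, inner_sub_left, _root_.map_sub, inner_self_eq_norm_sq]
  linarith [hA.1.norm_sq_oneAddInv_le hd w]

theorem IsMaximalAccretive.isCompl_range_oneAdd_ker_oneAddInv (hA : A.IsMaximalAccretive) :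
    IsCompl (LinearMap.range A.oneAdd) A.oneAddInv.ker := by
  have hinv := hA.1.oneAddInv_oneAdd hA.denseRange_oneAdd
  constructor
  · refine Submodule.disjoint_def.2 ?_
    rintro _ ⟨x, rfl⟩ hx
    rw [LinearMap.mem_ker, ContinuousLinearMap.coe_coe, hinv] at hx
    rw [show x = 0 from Subtype.ext hx, _root_.map_zero]
  · refine codisjoint_iff.2 (Submodule.eq_top_iff'.2 fun y => Submodule.mem_sup.2 ?_)
    set x : A.domain := ⟨A.oneAddInv y, hA.oneAddInv_mem_domain y⟩
    refine ⟨A.oneAdd x, LinearMap.mem_range_self _ x, y - A.oneAdd x, ?_, add_sub_cancel _ _⟩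
    rw [LinearMap.mem_ker, ContinuousLinearMap.coe_coe, _root_.map_sub, hinv, sub_self]

end LinearPMap

/-- If `A` is a maximal accretive operator in a complex Hilbert space
`H` such that `rg(I+A)` is an operator range in `H` (the range of some bounded operator
on `H`), then `A` is m-accretive, i.e. `rg(I+A) = H`. -/
theorem maximal_accretive_operator_range_m_accretive
    {H : Type*} [NormedAddCommGroup H] [InnerProductSpace ℂ H] [CompleteSpace H]
    (A : H →ₗ.[ℂ] H)
    (hacc : ∀ x : A.domain, 0 ≤ (⟪A x, (x : H)⟫_ℂ).re)
    (hmax : ∀ B : H →ₗ.[ℂ] H, (∀ x : B.domain, 0 ≤ (⟪B x, (x : H)⟫_ℂ).re) →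
      A ≤ B → A = B)
    (R₀ : H →L[ℂ] H)
    (hR₀ : Set.range (fun x : A.domain => (x : H) + A x) = Set.range R₀) :
    Set.range (fun x : A.domain => (x : H) + A x) = Set.univ := by
  have hA : A.IsMaximalAccretive := ⟨hacc, hmax⟩
  have hrange : LinearMap.range A.oneAdd = R₀.range :=
    SetLike.coe_injective (by rw [LinearPMap.coe_range_oneAdd, hR₀, LinearMap.coe_range]; rfl)
  have hclosed : IsClosed (LinearMap.range A.oneAdd : Set H) := by
    rw [hrange]
    exact R₀.isClosed_range_of_isCompl _ (hrange ▸ hA.isCompl_range_oneAdd_ker_oneAddInv)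
      A.oneAddInv.isClosed_ker
  rw [← LinearPMap.coe_range_oneAdd, hclosed.closure_eq.symm, LinearMap.coe_range,
    hA.denseRange_oneAdd.closure_eq]
end
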